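/- (Deterministic loop-erasure claim.) Let ℓ be a unit vector in ℝ², L > 0, and let X = (X_n)_{n≥0} be a sequence in ℤ² with T_{≥L}(X) < ∞. Suppose that X ∈ B_ℓ (i.e., some finite sequence of loop erasures removes every visit of X to the half-space {x · ℓ < 0}) but X ∉ G_0^L (i.e., no Y ∈ ℰ((X_n)_{n=0}^{T_{≥L}}) satisfies T_{≥L}(Y) < T_{<0}(Y)). Then there exist times 0 ≤ k < m < T_{≥L}(X) < n such that X_m · ℓ < 0 and X_k = X_n. -/

import Mathlib

/-!
A loop erasure `Y` of `X` is `X ∘ ψ` for a strictly increasing `ψ` such that every block of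
times skipped by `ψ` is a loop of `X`. Let `t = T_{≥L}(X)`, let `ψ p` be the first surviving time
after `t`, and `[a, ψ p)` the block skipped just before it. If `X` visits `{x · ℓ < 0}` at a time
`m ∈ [a, t)`, then `(a, m, ψ p)` is the required triple; `a ≠ m` because `X_a = X_{ψ p} = Y_p`.
Otherwise erase from `X` stopped at `t` only the loops of `Y` that lie before `a`: the result keeps
`ψ 0, …, ψ (p - 1)` and then every time from `a` on, so it reaches `X_t` without ever entering
`{x · ℓ < 0}`, which puts `X` in `G_0^L`.
-/

open MeasureTheory ProbabilityTheory Filter Topology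

noncomputable section

/-- Vertices of `ℤ^d`. -/
abbrev Zd (d : ℕ) := Fin d → ℤ

/-- Trajectories of a walk on `ℤ^d`. -/
abbrev Traj (d : ℕ) := ℕ → Zd d

/-- Embedding of `ℤ^d` into Euclidean `ℝ^d`. -/
def toE {d : ℕ} (x : Zd d) : EuclideanSpace ℝ (Fin d) := WithLp.toLp 2 (fun i => (x i : ℝ))

/-- Dot product of a lattice point with a real vector. -/
def dotl {d : ℕ} (x : Zd d) (ℓ : EuclideanSpace ℝ (Fin d)) : ℝ := ∑ i, (x i : ℝ) * ℓ i

/-- The space of environments on `ℤ^d`. -/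
abbrev EnvSp (d : ℕ) :=
  {ω : Zd d → Zd d → ℝ // (∀ x y, 0 ≤ ω x y) ∧ ∀ x, HasSum (ω x) 1}

/-- `κ x ω` is the quenched law `P_ω^x` of the walk started at `x` in the environment `ω`,
characterized by its cylinder probabilities. -/
def IsQuenched {d : ℕ} (κ : Zd d → Kernel (EnvSp d) (Traj d)) : Prop :=
  ∀ (x : Zd d) (ω : EnvSp d) (n : ℕ) (p : ℕ → Zd d),
    (κ x) ω {X | ∀ i ≤ n, X i = p i} =
      (if p 0 = x then 1 else 0) *
        ∏ i ∈ Finset.range n, ENNReal.ofReal (ω.1 (p i) (p (i + 1)))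

/-- The annealed law `P^x`. -/
def ann {d : ℕ} (P : Measure (EnvSp d)) (κ : Zd d → Kernel (EnvSp d) (Traj d))
    (x : Zd d) : Measure (Traj d) :=
  P.bind fun ω => (κ x) ω

/-- The annealed law `P^{a,b}` of two walks moving independently in a common environment. -/
def annPair {d : ℕ} (P : Measure (EnvSp d)) (κ : Zd d → Kernel (EnvSp d) (Traj d))
    (a b : Zd d) : Measure (Traj d × Traj d) :=
  P.bind fun ω => ((κ a) ω).prod ((κ b) ω)

/-- (C1): the transition probability vectors at the various sites are i.i.d. -/
def CondC1 {d : ℕ} (P : Measure (EnvSp d)) : Prop :=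
  iIndepFun
    (fun x (ω : EnvSp d) => fun y : Zd d => ω.1 x (x + y)) P ∧
  ∀ x : Zd d,
    IdentDistrib (fun ω : EnvSp d => fun y : Zd d => ω.1 x (x + y))
      (fun ω : EnvSp d => fun y : Zd d => ω.1 0 (0 + y)) P P

/-- (C2): jumps are bounded by `R`. -/
def CondC2 {d : ℕ} (P : Measure (EnvSp d)) (R : ℝ) : Prop :=
  0 < R ∧ ∀ᵐ ω ∂P, ∀ x y : Zd d, R < ‖toE x - toE y‖ → ω.1 x y = 0

/-- (C3): a generating set of steps that are a.s. available. -/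
def CondC3 {d : ℕ} (P : Measure (EnvSp d)) : Prop :=
  ∃ N : Set (Zd d), AddSubmonoid.closure N = ⊤ ∧ ∀ y ∈ N, P {ω | 0 < ω.1 0 y} = 1

/-- The event `A_ℓ` of transience in direction `ℓ`. -/
def Adir {d : ℕ} (ℓ : EuclideanSpace ℝ (Fin d)) : Set (Traj d) :=
  {X | Tendsto (fun n => dotl (X n) ℓ) atTop atTop}

/-- The event `A_{-ℓ}`. -/
def AdirNeg {d : ℕ} (ℓ : EuclideanSpace ℝ (Fin d)) : Set (Traj d) :=
  {X | Tendsto (fun n => dotl (X n) ℓ) atTop atBot}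

/-- First hitting time of a set, valued in `ℕ∞`. -/
def hitTime {α : Type*} (A : Set α) (X : ℕ → α) : ℕ∞ :=
  ⨅ (k : ℕ) (_ : X k ∈ A), (k : ℕ∞)

/-- `T_{<a}` (with respect to direction `ℓ`). -/
def Tlt {d : ℕ} (ℓ : EuclideanSpace ℝ (Fin d)) (a : ℝ) : Traj d → ℕ∞ :=
  hitTime {x | dotl x ℓ < a}

/-- `T_{≤a}`. -/
def Tle {d : ℕ} (ℓ : EuclideanSpace ℝ (Fin d)) (a : ℝ) : Traj d → ℕ∞ :=
  hitTime {x | dotl x ℓ ≤ a}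

/-- `T_{>a}`. -/
def Tgt {d : ℕ} (ℓ : EuclideanSpace ℝ (Fin d)) (a : ℝ) : Traj d → ℕ∞ :=
  hitTime {x | a < dotl x ℓ}

/-- `T_{≥a}`. -/
def Tge {d : ℕ} (ℓ : EuclideanSpace ℝ (Fin d)) (a : ℝ) : Traj d → ℕ∞ :=
  hitTime {x | a ≤ dotl x ℓ}

/-- `Y` is obtained from `X` by erasing a single loop. -/
def EraseOne {α : Type*} (X Y : ℕ → α) : Prop :=
  ∃ m n : ℕ, m < n ∧ X m = X n ∧ Y = fun i => if i < m then X i else X (i + (n - m))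

/-- `ℰ(X)`: all paths obtained from `X` by erasing finitely many loops in any order. -/
def LoopErasures {α : Type*} (X : ℕ → α) : Set (ℕ → α) :=
  {Y | Relation.ReflTransGen EraseOne X Y}

/-- The event `B_ℓ`. -/
def Bdir {d : ℕ} (ℓ : EuclideanSpace ℝ (Fin d)) : Set (Traj d) :=
  {X | ∃ Y ∈ LoopErasures X, Tlt ℓ 0 Y = ⊤}

/-- The path `X` stopped at the (possibly infinite) time `T`;
for `n ≥ T` it stays at `X_T`. -/
def stopped {α : Type*} (X : ℕ → α) (T : ℕ∞) : ℕ → α :=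
  fun n => if (n : ℕ∞) < T then X n else X T.toNat

/-- The event `G_a^b` (for `a < b` it uses `T_{≥b}`, for `a > b` it uses `T_{≤b}`). -/
def Gset {d : ℕ} (ℓ : EuclideanSpace ℝ (Fin d)) (a b : ℝ) : Set (Traj d) :=
  if a < b then
    {X | Tge ℓ b X ≠ ⊤ ∧
      ∃ Y ∈ LoopErasures (stopped X (Tge ℓ b X)), Tge ℓ b Y < Tlt ℓ a Y}
  else
    {X | Tle ℓ b X ≠ ⊤ ∧
      ∃ Y ∈ LoopErasures (stopped X (Tle ℓ b X)), Tle ℓ b Y < Tgt ℓ a Y}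


section HitTime

variable {α : Type*} {A : Set α} {X : ℕ → α}

theorem hitTime_le_of_mem {k : ℕ} (hk : X k ∈ A) : hitTime A X ≤ k :=
  iInf₂_le k hk

theorem hitTime_eq_top_iff : hitTime A X = ⊤ ↔ ∀ k, X k ∉ A := by
  simp [hitTime, iInf_eq_top]

theorem exists_hitTime_eq_coe (h : hitTime A X ≠ ⊤) : ∃ t : ℕ, hitTime A X = t ∧ X t ∈ A := by
  classical
  have hex : ∃ k, X k ∈ A := by simpa [hitTime_eq_top_iff] using h
  refine ⟨Nat.find hex, le_antisymm (hitTime_le_of_mem (Nat.find_spec hex)) ?_, Nat.find_spec hex⟩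
  exact le_iInf₂ fun k hk => by exact_mod_cast Nat.find_min' hex hk

end HitTime

section Stopped

variable {α : Type*} {X : ℕ → α} {t n : ℕ}

theorem stopped_natCast_of_le (h : n ≤ t) : stopped X t n = X n := by
  rcases h.lt_or_eq with h | rfl <;> simp [stopped, *]

theorem stopped_natCast_of_ge (h : t ≤ n) : stopped X t n = X t := by
  simp [stopped, h]

end Stopped

/-- For increasing `ψ`, the times in `[gapStart ψ p, ψ p)` are those skipped just before `ψ p`. -/
def gapStart (ψ : ℕ → ℕ) : ℕ → ℕ
  | 0 => 0
  | i + 1 => ψ i + 1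

@[simp] theorem gapStart_zero (ψ : ℕ → ℕ) : gapStart ψ 0 = 0 := rfl

@[simp] theorem gapStart_succ (ψ : ℕ → ℕ) (i : ℕ) : gapStart ψ (i + 1) = ψ i + 1 := rfl

theorem gapStart_le {ψ : ℕ → ℕ} (hψ : StrictMono ψ) : ∀ p, gapStart ψ p ≤ ψ p
  | 0 => Nat.zero_le _
  | i + 1 => hψ (Nat.lt_succ_self i)

/-- `X ∘ ψ` is `X` with the times outside the range of `ψ` deleted, and every maximal block of
deleted times is a loop of `X`. -/
structure IsLoopErasingMap {α : Type*} (X : ℕ → α) (ψ : ℕ → ℕ) : Prop where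
  strictMono : StrictMono ψ
  apply_gapStart : ∀ p, X (gapStart ψ p) = X (ψ p)

namespace IsLoopErasingMap

variable {α : Type*} {X : ℕ → α}

theorem id : IsLoopErasingMap X id :=
  ⟨strictMono_id, fun p => by cases p <;> rfl⟩

theorem comp {ψ φ : ℕ → ℕ} (hψ : IsLoopErasingMap X ψ) (hφ : IsLoopErasingMap (X ∘ ψ) φ) :
    IsLoopErasingMap X (ψ ∘ φ) := by
  refine ⟨hψ.strictMono.comp hφ.strictMono, fun p => ?_⟩
  have h := hφ.apply_gapStart p
  cases p with
  | zero => exact (hψ.apply_gapStart 0).trans h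
  | succ i => exact (hψ.apply_gapStart (φ i + 1)).trans h

end IsLoopErasingMap

theorem EraseOne.exists_isLoopErasingMap {α : Type*} {X Y : ℕ → α} (h : EraseOne X Y) :
    ∃ φ, IsLoopErasingMap X φ ∧ Y = X ∘ φ := by
  obtain ⟨m, n, hmn, hXmn, rfl⟩ := h
  refine ⟨fun i => if i < m then i else i + (n - m), ⟨fun i j hij => ?_, fun p => ?_⟩, ?_⟩
  · split_ifs <;> omega
  · rcases p with _ | i
    · rcases Nat.eq_zero_or_pos m with rfl | hm <;> simp_all
    · simp only [gapStart_succ]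
      rcases lt_trichotomy (i + 1) m with h | rfl | h
      · simp [h, Nat.lt_of_succ_lt h]
      · simpa [show i + 1 + (n - (i + 1)) = n by omega] using hXmn
      · simp only [show ¬i < m by omega, show ¬i + 1 < m by omega, if_false]
        congr 1
        omega
  · funext i
    simp only [Function.comp_apply]
    split_ifs <;> rfl

theorem exists_isLoopErasingMap_of_mem_loopErasures {α : Type*} {X Y : ℕ → α}
    (h : Y ∈ LoopErasures X) : ∃ ψ, IsLoopErasingMap X ψ ∧ Y = X ∘ ψ := by
  induction h with
  | refl => exact ⟨id, IsLoopErasingMap.id, rfl⟩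
  | tail _ hstep ih =>
    obtain ⟨ψ, hψ, rfl⟩ := ih
    obtain ⟨φ, hφ, rfl⟩ := hstep.exists_isLoopErasingMap
    exact ⟨ψ ∘ φ, hψ.comp hφ, rfl⟩

theorem erase_mem_loopErasures {α : Type*} {X : ℕ → α} {m g : ℕ} (h : X m = X (m + g)) :
    (fun i => if i < m then X i else X (i + g)) ∈ LoopErasures X := by
  rcases Nat.eq_zero_or_pos g with rfl | hg
  · simp only [add_zero, ite_self]
    exact Relation.ReflTransGen.refl
  · exact Relation.ReflTransGen.single ⟨m, m + g, by omega, h, by simp⟩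

def keepUntil (ψ : ℕ → ℕ) (p : ℕ) (i : ℕ) : ℕ :=
  if i < p then ψ i else gapStart ψ p + (i - p)

theorem keepUntil_zero (ψ : ℕ → ℕ) : keepUntil ψ 0 = id := by
  funext i
  simp [keepUntil]

/-- Passing from `keepUntil ψ p` to `keepUntil ψ (p + 1)` erases the single loop
`[gapStart ψ p, ψ p)`. -/
theorem comp_keepUntil_mem_loopErasures {α : Type*} {X : ℕ → α} {ψ : ℕ → ℕ}
    (hψ : StrictMono ψ) {p : ℕ} (hX : ∀ q < p, X (gapStart ψ q) = X (ψ q)) :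
    X ∘ keepUntil ψ p ∈ LoopErasures X := by
  induction p with
  | zero =>
    rw [keepUntil_zero]
    exact Relation.ReflTransGen.refl
  | succ p ih =>
    have hle := gapStart_le hψ p
    have hstep : X ∘ keepUntil ψ (p + 1) = fun i =>
        if i < p then (X ∘ keepUntil ψ p) i
        else (X ∘ keepUntil ψ p) (i + (ψ p - gapStart ψ p)) := by
      funext i
      simp only [Function.comp_apply, keepUntil, gapStart_succ]
      rcases lt_trichotomy i p with h | rfl | h
      · simp [h, Nat.lt_succ_of_lt h]
      · simp only [lt_add_one, lt_irrefl, if_true, if_false, Nat.sub_self, add_zero,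
          show ¬i + (ψ i - gapStart ψ i) < i by omega]
        congr 1
        omega
      · simp only [show ¬i < p + 1 by omega, show ¬i < p by omega,
          show ¬i + (ψ p - gapStart ψ p) < p by omega, if_false]
        congr 1
        omega
    refine (ih fun q hq => hX q (by omega)).trans ?_
    rw [hstep]
    refine erase_mem_loopErasures ?_
    simp only [Function.comp_apply, keepUntil, lt_irrefl, if_false,
      show ¬p + (ψ p - gapStart ψ p) < p by omega, Nat.sub_self, add_zero,
      show gapStart ψ p + (p + (ψ p - gapStart ψ p) - p) = ψ p by omega]
    exact hX p (by omega)

theorem IsLoopErasingMap.stopped_comp_keepUntil_mem_loopErasures {α : Type*} {X : ℕ → α}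
    {ψ : ℕ → ℕ} (hψ : IsLoopErasingMap X ψ) {p t : ℕ} (hpt : ∀ i < p, ψ i ≤ t) :
    stopped X t ∘ keepUntil ψ p ∈ LoopErasures (stopped X t) :=
  comp_keepUntil_mem_loopErasures hψ.strictMono fun q hq => by
    rw [stopped_natCast_of_le ((gapStart_le hψ.strictMono q).trans (hpt q hq)),
      stopped_natCast_of_le (hpt q hq), hψ.apply_gapStart]

theorem exists_loop_around_of_mem_loopErasures {α : Type*} {X Y : ℕ → α} {S G : Set α}
    {t : ℕ} (hY : Y ∈ LoopErasures X) (hYS : hitTime S Y = ⊤) (hXtG : X t ∈ G)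
    (hXtS : X t ∉ S) (hG : ¬∃ Z ∈ LoopErasures (stopped X t), hitTime G Z < hitTime S Z) :
    ∃ k m n : ℕ, k < m ∧ m < t ∧ t < n ∧ X m ∈ S ∧ X k = X n := by
  classical
  obtain ⟨ψ, hψ, rfl⟩ := exists_isLoopErasingMap_of_mem_loopErasures hY
  rw [hitTime_eq_top_iff] at hYS
  have hex : ∃ p, t < ψ p := ⟨t + 1, (Nat.lt_succ_self t).trans_le (hψ.strictMono.id_le _)⟩
  set p := Nat.find hex
  have hpt : ∀ i < p, ψ i ≤ t := fun i hi => not_lt.1 (Nat.find_min hex hi)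
  by_contra! hno
  have hgap : ∀ m, gapStart ψ p ≤ m → m < t → X m ∉ S := by
    intro m hpm hmt hm
    have hne : gapStart ψ p ≠ m := by
      rintro rfl
      exact hYS p (by rwa [Function.comp_apply, ← hψ.apply_gapStart p])
    exact hno _ m _ (lt_of_le_of_ne hpm hne) hmt (Nat.find_spec hex) hm (hψ.apply_gapStart p)
  refine hG ⟨_, hψ.stopped_comp_keepUntil_mem_loopErasures hpt, ?_⟩
  have hZS : hitTime S (stopped X t ∘ keepUntil ψ p) = ⊤ := by
    refine hitTime_eq_top_iff.2 fun i => ?_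
    simp only [Function.comp_apply, keepUntil]
    split_ifs with hip
    · rw [stopped_natCast_of_le (hpt i hip)]
      exact hYS i
    · rcases lt_or_ge (gapStart ψ p + (i - p)) t with hj | hj
      · rw [stopped_natCast_of_le hj.le]
        exact hgap _ le_self_add hj
      · rwa [stopped_natCast_of_ge hj]
  have hZG : (stopped X t ∘ keepUntil ψ p) (p + t) ∈ G := by
    simp only [Function.comp_apply, keepUntil, show ¬p + t < p by omega, if_false]
    rwa [stopped_natCast_of_ge (by omega)]
  rw [hZS]
  exact (hitTime_le_of_mem hZG).trans_lt (ENat.natCast_lt_top _)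

theorem loop_erasure_claim_general
    (ℓ : EuclideanSpace ℝ (Fin 2)) (L : ℝ) (hL : 0 < L)
    (X : Traj 2) (hT : Tge ℓ L X ≠ ⊤)
    (hB : X ∈ Bdir ℓ) (hG : X ∉ Gset ℓ 0 L) :
    ∃ k m n : ℕ, k < m ∧ (m : ℕ∞) < Tge ℓ L X ∧ Tge ℓ L X < (n : ℕ∞) ∧
      dotl (X m) ℓ < 0 ∧ X k = X n := by
  obtain ⟨t, hTt, hXt⟩ : ∃ t : ℕ, Tge ℓ L X = t ∧ L ≤ dotl (X t) ℓ := exists_hitTime_eq_coe hT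
  obtain ⟨Y, hY, hYS⟩ := hB
  have hXtS : ¬dotl (X t) ℓ < 0 := fun h => (hL.trans_le hXt).not_gt h
  have hGt : ¬∃ Z ∈ LoopErasures (stopped X t), Tge ℓ L Z < Tlt ℓ 0 Z := fun hZ =>
    hG (by rw [Gset, if_pos hL, Set.mem_ofPred_eq, hTt]; exact ⟨ENat.natCast_ne_top t, hZ⟩)
  obtain ⟨k, m, n, hkm, hmt, htn, hm, hkn⟩ :=
    exists_loop_around_of_mem_loopErasures hY hYS hXt hXtS hGt
  rw [hTt]
  exact ⟨k, m, n, hkm, Nat.cast_lt.2 hmt, Nat.cast_lt.2 htn, hm, hkn⟩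

/-- Deterministic loop-erasure claim: if `T_{≥L}(X) < ∞`, `X ∈ B_ℓ`, but `X ∉ G_0^L`,
then there are times `0 ≤ k < m < T_{≥L}(X) < n` with `X_m · ℓ < 0` and `X_k = X_n`. -/
theorem loop_erasure_claim
    (ℓ : EuclideanSpace ℝ (Fin 2)) (hℓ : ‖ℓ‖ = 1) (L : ℝ) (hL : 0 < L)
    (X : Traj 2) (hT : Tge ℓ L X ≠ ⊤)
    (hB : X ∈ Bdir ℓ) (hG : X ∉ Gset ℓ 0 L) :
    ∃ k m n : ℕ, k < m ∧ (m : ℕ∞) < Tge ℓ L X ∧ Tge ℓ L X < (n : ℕ∞) ∧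
      dotl (X m) ℓ < 0 ∧ X k = X n :=
  loop_erasure_claim_general ℓ L hL X hT hB hG
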